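/- arXiv:2010.08842 — 4 statements merged into one kernel-verified Lean document; each statement's English description precedes it below -/
import Mathlib

section
/- Let d ≥ 1, let L be a unimodular lattice in ℝ^d, let α ∈ ℝ^d and let N ≥ 1 be an integer. Then the number g_N*(α,L) of distinct values taken by the nearest-neighbor distances δ*_{n,N}, 1 ≤ n ≤ N, with respect to the maximum metric, satisfies g_N*(α,L) ≤ 2^d + 1. -/
open Matrix Set

/-- The point of the lattice `ℤ^d M₀` corresponding to the integer row vector `w`. -/
noncomputable def latticeVec {d : ℕ} (M₀ : Matrix (Fin d) (Fin d) ℝ) (w : Fin d → ℤ) :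
    Fin d → ℝ :=
  (fun i => (w i : ℝ)) ᵥ* M₀

/-- `δ*_{n,N}`: the smallest positive distance, in the maximum metric (the sup norm on
`Fin d → ℝ`), from `n α` to a point `m α + ℓ` with `1 ≤ m ≤ N` and `ℓ ∈ ℤ^d M₀`. -/
noncomputable def deltaStar {d : ℕ} (M₀ : Matrix (Fin d) (Fin d) ℝ) (α : Fin d → ℝ)
    (N n : ℕ) : ℝ :=
  sInf { r : ℝ | ∃ (m : ℕ) (w : Fin d → ℤ), 1 ≤ m ∧ m ≤ N ∧
    r = ‖(n : ℝ) • α - (m : ℝ) • α - latticeVec M₀ w‖ ∧ 0 < r }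

/-- `g_N^*(α, ℤ^d M₀)`: the number of distinct values among `δ*_{1,N}, …, δ*_{N,N}`. -/
noncomputable def gStar {d : ℕ} (M₀ : Matrix (Fin d) (Fin d) ℝ) (α : Fin d → ℝ) (N : ℕ) : ℕ :=
  { x : ℝ | ∃ n : ℕ, 1 ≤ n ∧ n ≤ N ∧ x = deltaStar M₀ α N n }.ncard

/-! ### Auxiliary definitions -/

/-- The set of positive distances from `k α` to lattice points. -/
def Sset {d : ℕ} (M₀ : Matrix (Fin d) (Fin d) ℝ) (α : Fin d → ℝ) (k : ℕ) : Set ℝ :=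
  {r | ∃ w : Fin d → ℤ, r = ‖(k : ℝ) • α - latticeVec M₀ w‖ ∧ 0 < r}

/-- Union of the `Sset`s for `k ≤ t`. -/
def Uset {d : ℕ} (M₀ : Matrix (Fin d) (Fin d) ℝ) (α : Fin d → ℝ) (t : ℕ) : Set ℝ :=
  {r | ∃ k ≤ t, r ∈ Sset M₀ α k}

/-- The minimum positive distance from some `k α`, `k ≤ t`, to a lattice point. -/
noncomputable def Gfun {d : ℕ} (M₀ : Matrix (Fin d) (Fin d) ℝ) (α : Fin d → ℝ) (t : ℕ) : ℝ :=
  sInf (Uset M₀ α t)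

/-! ### Basic lattice lemmas -/

lemma latticeVec_sub {d : ℕ} (M₀ : Matrix (Fin d) (Fin d) ℝ) (w w' : Fin d → ℤ) :
    latticeVec M₀ (w - w') = latticeVec M₀ w - latticeVec M₀ w' := by
  unfold latticeVec
  have h : (fun i => ((w - w') i : ℝ)) = (fun i => (w i : ℝ)) - (fun i => (w' i : ℝ)) := by
    funext i; simp
  rw [h, Matrix.sub_vecMul]

lemma latticeVec_neg {d : ℕ} (M₀ : Matrix (Fin d) (Fin d) ℝ) (w : Fin d → ℤ) :
    latticeVec M₀ (-w) = - latticeVec M₀ w := by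
  unfold latticeVec
  have h : (fun i => ((-w) i : ℝ)) = -(fun i => (w i : ℝ)) := by funext i; simp
  rw [h, Matrix.neg_vecMul]

lemma vecMul_inv {d : ℕ} {M₀ : Matrix (Fin d) (Fin d) ℝ} (hM₀ : M₀.det = 1)
    (v : Fin d → ℝ) : (v ᵥ* M₀) ᵥ* M₀⁻¹ = v := by
  rw [Matrix.vecMul_vecMul, Matrix.mul_nonsing_inv _ (by simp [hM₀]), Matrix.vecMul_one]

lemma latticeVec_inj {d : ℕ} {M₀ : Matrix (Fin d) (Fin d) ℝ} (hM₀ : M₀.det = 1)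
    {w w' : Fin d → ℤ} (h : latticeVec M₀ w = latticeVec M₀ w') : w = w' := by
  have h2 : ((fun i => (w i : ℝ)) ᵥ* M₀) ᵥ* M₀⁻¹ = ((fun i => (w' i : ℝ)) ᵥ* M₀) ᵥ* M₀⁻¹ := by
    rw [show (fun i => (w i : ℝ)) ᵥ* M₀ = (fun i => (w' i : ℝ)) ᵥ* M₀ from h]
  rw [vecMul_inv hM₀, vecMul_inv hM₀] at h2
  funext i
  have := congrFun h2 i
  exact_mod_cast this

/-- Finiteness of lattice points near a given point. -/
lemma finite_close {d : ℕ} {M₀ : Matrix (Fin d) (Fin d) ℝ} (hM₀ : M₀.det = 1)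
    (c : Fin d → ℝ) (R : ℝ) :
    {w : Fin d → ℤ | ‖c - latticeVec M₀ w‖ ≤ R}.Finite := by
  set C : ℝ := ∑ j, ∑ i, |M₀⁻¹ j i| with hC
  have hC0 : 0 ≤ C := Finset.sum_nonneg fun j _ => Finset.sum_nonneg fun i _ => abs_nonneg _
  set B : ℝ := ‖c‖ + |R| with hB
  have hB0 : 0 ≤ B := add_nonneg (norm_nonneg _) (abs_nonneg _)
  set b : ℤ := ⌈B * C⌉ with hb
  apply Set.Finite.subset (Set.finite_Icc (fun _ : Fin d => -b) (fun _ => b))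
  intro w hw
  simp only [Set.mem_setOf_eq] at hw
  have hu : ‖latticeVec M₀ w‖ ≤ B := by
    have h1 : ‖latticeVec M₀ w‖ - ‖c‖ ≤ ‖latticeVec M₀ w - c‖ := norm_sub_norm_le _ _
    have h2 : ‖latticeVec M₀ w - c‖ = ‖c - latticeVec M₀ w‖ := norm_sub_rev _ _
    have h3 : R ≤ |R| := le_abs_self R
    rw [hB]; linarith
  have key : ∀ i, |(w i : ℝ)| ≤ B * C := by
    intro i
    have hwi : (w i : ℝ) = ∑ j, latticeVec M₀ w j * M₀⁻¹ j i := by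
      have h := congrFun (vecMul_inv hM₀ (fun i => (w i : ℝ))) i
      rw [show ((fun i => (w i : ℝ)) ᵥ* M₀) = latticeVec M₀ w from rfl] at h
      rw [← h]
      simp [Matrix.vecMul, dotProduct]
    rw [hwi]
    calc |∑ j, latticeVec M₀ w j * M₀⁻¹ j i| ≤ ∑ j, |latticeVec M₀ w j * M₀⁻¹ j i| :=
          Finset.abs_sum_le_sum_abs _ _
      _ ≤ ∑ j, B * |M₀⁻¹ j i| := by
          apply Finset.sum_le_sum
          intro j _
          rw [abs_mul]
          apply mul_le_mul_of_nonneg_right _ (abs_nonneg _)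
          exact le_trans (by simpa using norm_le_pi_norm (latticeVec M₀ w) j) hu
      _ = B * ∑ j, |M₀⁻¹ j i| := by rw [Finset.mul_sum]
      _ ≤ B * C := by
          apply mul_le_mul_of_nonneg_left _ hB0
          apply Finset.sum_le_sum
          intro j _
          exact Finset.single_le_sum (f := fun i' => |M₀⁻¹ j i'|)
            (fun i' _ => abs_nonneg _) (Finset.mem_univ i)
  have hbi : ∀ i, -b ≤ w i ∧ w i ≤ b := by
    intro i
    have h1 : |(w i : ℝ)| ≤ (b : ℝ) := le_trans (key i) (Int.le_ceil _)
    have h2 : |w i| ≤ b := by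
      have h1' : ((|w i| : ℤ) : ℝ) ≤ ((b : ℤ) : ℝ) := by push_cast; exact h1
      exact_mod_cast h1' 
    exact abs_le.mp h2
  rw [Set.mem_Icc]
  exact ⟨fun i => (hbi i).1, fun i => (hbi i).2⟩

/-! ### Properties of `Sset`, `Uset`, `Gfun` -/

lemma Sset_nonempty {d : ℕ} (hd : 1 ≤ d) {M₀ : Matrix (Fin d) (Fin d) ℝ} (hM₀ : M₀.det = 1)
    (α : Fin d → ℝ) (k : ℕ) : (Sset M₀ α k).Nonempty := by
  set e : Fin d → ℤ := Pi.single ⟨0, hd⟩ 1 with he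
  have hlz : latticeVec M₀ (0 : Fin d → ℤ) = 0 := by
    unfold latticeVec
    rw [show (fun i => ((0 : Fin d → ℤ) i : ℝ)) = (0 : Fin d → ℝ) by funext i; simp]
    exact Matrix.zero_vecMul M₀
  by_cases h : (k : ℝ) • α - latticeVec M₀ 0 = 0
  · refine ⟨‖(k : ℝ) • α - latticeVec M₀ e‖, e, rfl, ?_⟩
    rw [norm_pos_iff]
    intro h2
    have : latticeVec M₀ e = latticeVec M₀ 0 := by
      rw [hlz]; rw [hlz] at h
      have := sub_eq_zero.mp h
      have := sub_eq_zero.mp h2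
      simp_all
    have : e = 0 := latticeVec_inj hM₀ this
    have : e ⟨0, hd⟩ = 0 := by rw [this]; rfl
    simp [he, Pi.single_apply] at this
  · exact ⟨‖(k : ℝ) • α - latticeVec M₀ 0‖, 0, rfl, norm_pos_iff.mpr h⟩

lemma Uset_nonneg {d : ℕ} (M₀ : Matrix (Fin d) (Fin d) ℝ) (α : Fin d → ℝ) (t : ℕ) :
    ∀ r ∈ Uset M₀ α t, 0 ≤ r := by
  rintro r ⟨k, _, w, _, hr⟩
  exact le_of_lt hr

lemma Uset_bdd {d : ℕ} (M₀ : Matrix (Fin d) (Fin d) ℝ) (α : Fin d → ℝ) (t : ℕ) :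
    BddBelow (Uset M₀ α t) :=
  ⟨0, Uset_nonneg M₀ α t⟩

lemma Uset_nonempty {d : ℕ} (hd : 1 ≤ d) {M₀ : Matrix (Fin d) (Fin d) ℝ} (hM₀ : M₀.det = 1)
    (α : Fin d → ℝ) (t : ℕ) : (Uset M₀ α t).Nonempty := by
  obtain ⟨r, hr⟩ := Sset_nonempty hd hM₀ α 0
  exact ⟨r, 0, Nat.zero_le t, hr⟩

lemma Uset_mono {d : ℕ} (M₀ : Matrix (Fin d) (Fin d) ℝ) (α : Fin d → ℝ) {s t : ℕ}
    (h : s ≤ t) : Uset M₀ α s ⊆ Uset M₀ α t := by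
  rintro r ⟨k, hk, hr⟩
  exact ⟨k, le_trans hk h, hr⟩

lemma G_isLeast {d : ℕ} (hd : 1 ≤ d) {M₀ : Matrix (Fin d) (Fin d) ℝ} (hM₀ : M₀.det = 1)
    (α : Fin d → ℝ) (t : ℕ) : IsLeast (Uset M₀ α t) (Gfun M₀ α t) := by
  obtain ⟨r0, hr0⟩ := Uset_nonempty hd hM₀ α t
  have hfin : (Uset M₀ α t ∩ Set.Iic r0).Finite := by
    apply Set.Finite.subset
      (Set.Finite.biUnion (Set.finite_Iic t)
        (fun k _ => Set.Finite.image (fun w => ‖(k : ℝ) • α - latticeVec M₀ w‖)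
          (finite_close hM₀ ((k : ℝ) • α) r0)))
    rintro r ⟨⟨k, hk, w, hre, hr⟩, hle⟩
    refine Set.mem_biUnion (Set.mem_Iic.mpr hk) ⟨w, ?_, hre.symm⟩
    simp only [Set.mem_setOf_eq]
    rw [← hre]
    exact hle
  have hne : (Uset M₀ α t ∩ Set.Iic r0).Nonempty := ⟨r0, hr0, le_refl r0⟩
  obtain ⟨a, ⟨haU, har0⟩, hmin⟩ := Set.exists_min_image _ id hfin hne
  have hleast : IsLeast (Uset M₀ α t) a := by
    refine ⟨haU, fun r hr => ?_⟩
    by_cases h : r ≤ r0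
    · exact hmin r ⟨hr, h⟩
    · push_neg at h
      exact le_trans har0 (le_of_lt h)
  rw [show Gfun M₀ α t = a from hleast.csInf_eq]
  exact hleast

lemma G_mem {d : ℕ} (hd : 1 ≤ d) {M₀ : Matrix (Fin d) (Fin d) ℝ} (hM₀ : M₀.det = 1)
    (α : Fin d → ℝ) (t : ℕ) : Gfun M₀ α t ∈ Uset M₀ α t :=
  (G_isLeast hd hM₀ α t).1

lemma G_le {d : ℕ} (hd : 1 ≤ d) {M₀ : Matrix (Fin d) (Fin d) ℝ} (hM₀ : M₀.det = 1)
    (α : Fin d → ℝ) (t : ℕ) {r : ℝ} (hr : r ∈ Uset M₀ α t) : Gfun M₀ α t ≤ r :=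
  (G_isLeast hd hM₀ α t).2 hr

lemma G_anti {d : ℕ} (hd : 1 ≤ d) {M₀ : Matrix (Fin d) (Fin d) ℝ} (hM₀ : M₀.det = 1)
    (α : Fin d → ℝ) {s t : ℕ} (h : s ≤ t) : Gfun M₀ α t ≤ Gfun M₀ α s :=
  G_le hd hM₀ α t (Uset_mono M₀ α h (G_mem hd hM₀ α s))

/-! ### `deltaStar` in terms of `Gfun` -/

lemma deltaStar_eq {d : ℕ} (M₀ : Matrix (Fin d) (Fin d) ℝ) (α : Fin d → ℝ) (N n : ℕ)
    (hn1 : 1 ≤ n) (hnN : n ≤ N) :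
    deltaStar M₀ α N n = Gfun M₀ α (max (n - 1) (N - n)) := by
  unfold deltaStar Gfun
  congr 1
  ext r
  constructor
  · rintro ⟨m, w, hm1, hmN, hre, hr⟩
    by_cases hmn : m ≤ n
    · have h2 : (n : ℝ) • α - (m : ℝ) • α - latticeVec M₀ w
          = ((n - m : ℕ) : ℝ) • α - latticeVec M₀ w := by
        rw [Nat.cast_sub hmn, sub_smul]
      exact ⟨n - m, le_trans (by omega) (le_max_left (n - 1) (N - n)), w, by rw [hre, h2], hr⟩
    · push_neg at hmn
      have h2 : (n : ℝ) • α - (m : ℝ) • α - latticeVec M₀ w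
          = -(((m - n : ℕ) : ℝ) • α - latticeVec M₀ (-w)) := by
        rw [latticeVec_neg, Nat.cast_sub (le_of_lt hmn), sub_smul]
        module
      refine ⟨m - n, le_trans (by omega) (le_max_right (n - 1) (N - n)), -w, ?_, hr⟩
      rw [hre, h2, norm_neg]
  · rintro ⟨k, hk, w, hre, hr⟩
    by_cases hkn : k ≤ n - 1
    · refine ⟨n - k, w, by omega, by omega, ?_, hr⟩
      have h2 : ((k : ℕ) : ℝ) • α = (n : ℝ) • α - ((n - k : ℕ) : ℝ) • α := by
        rw [Nat.cast_sub (by omega), sub_smul]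
        module
      rw [hre, h2]
    · have hk' : k ≤ N - n := by
        rcases max_cases (n - 1) (N - n) with ⟨h1, _⟩ | ⟨h1, _⟩ <;> omega
      refine ⟨n + k, -w, by omega, by omega, ?_, hr⟩
      have h2 : (n : ℝ) • α - ((n + k : ℕ) : ℝ) • α - latticeVec M₀ (-w)
          = -(((k : ℕ) : ℝ) • α - latticeVec M₀ w) := by
        rw [latticeVec_neg]
        push_cast
        rw [add_smul]
        module
      rw [hre, ← norm_neg, ← h2]

/-! ### The sign-pattern lemma for the sup norm -/

lemma sign_compat {d : ℕ} (u v : Fin d → ℝ)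
    (h : ∀ i, (0 ≤ u i ∧ 0 ≤ v i) ∨ (u i < 0 ∧ v i < 0)) :
    ‖u - v‖ ≤ max ‖u‖ ‖v‖ := by
  apply (pi_norm_le_iff_of_nonneg (le_max_of_le_left (norm_nonneg u))).2
  intro i
  have hu : |u i| ≤ ‖u‖ := by simpa using norm_le_pi_norm u i
  have hv : |v i| ≤ ‖v‖ := by simpa using norm_le_pi_norm v i
  have hu' : ‖u‖ ≤ max ‖u‖ ‖v‖ := le_max_left _ _
  have hv' : ‖v‖ ≤ max ‖u‖ ‖v‖ := le_max_right _ _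
  rw [Real.norm_eq_abs]
  simp only [Pi.sub_apply]
  rcases h i with ⟨h1, h2⟩ | ⟨h1, h2⟩
  · rw [abs_of_nonneg h1] at hu
    rw [abs_of_nonneg h2] at hv
    rw [abs_sub_le_iff]
    constructor <;> linarith
  · rw [abs_of_neg h1] at hu
    rw [abs_of_neg h2] at hv
    rw [abs_sub_le_iff]
    constructor <;> linarith

/-! ### Extraction of the minimizer at a drop point -/

lemma drop_minimizer {d : ℕ} (hd : 1 ≤ d) {M₀ : Matrix (Fin d) (Fin d) ℝ} (hM₀ : M₀.det = 1)
    (α : Fin d → ℝ) {t : ℕ} (ht1 : 1 ≤ t) (hdrop : Gfun M₀ α t < Gfun M₀ α (t - 1)) :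
    ∃ w : Fin d → ℤ, Gfun M₀ α t = ‖(t : ℝ) • α - latticeVec M₀ w‖ ∧
      0 < ‖(t : ℝ) • α - latticeVec M₀ w‖ := by
  obtain ⟨k, hk, w, hre, hr⟩ := G_mem hd hM₀ α t
  by_cases hkt : k ≤ t - 1
  · exfalso
    have : Gfun M₀ α t ∈ Uset M₀ α (t - 1) := ⟨k, hkt, w, hre, hr⟩
    have := G_le hd hM₀ α (t - 1) this
    linarith
  · have : k = t := by omega
    subst this
    exact ⟨w, hre, hre ▸ hr⟩

/-! ### Main theorem -/

/-- For any `d ≥ 1`, any unimodular lattice `L = ℤ^d M₀` in `ℝ^d`, any `α ∈ ℝ^d` and any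
integer `N ≥ 1`, the number of distinct nearest-neighbour distances with respect to the
maximum metric satisfies `g_N^*(α, L) ≤ 2^d + 1`. -/
theorem gapsBound_maxMetric (d : ℕ) (hd : 1 ≤ d)
    (M₀ : Matrix (Fin d) (Fin d) ℝ) (hM₀ : M₀.det = 1)
    (α : Fin d → ℝ) (N : ℕ) (hN : 1 ≤ N) :
    gStar M₀ α N ≤ 2 ^ d + 1 := by
  set m0 : ℕ := N - 1 - (N - 1) / 2 with hm0
  set T : Set ℕ := {t | m0 < t ∧ t ≤ N - 1 ∧ Gfun M₀ α t < Gfun M₀ α (t - 1)} with hT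
  -- choose minimizers at the drop points
  have hv : ∀ t : ℕ, ∃ w : Fin d → ℤ, t ∈ T →
      Gfun M₀ α t = ‖(t : ℝ) • α - latticeVec M₀ w‖ ∧
        0 < ‖(t : ℝ) • α - latticeVec M₀ w‖ := by
    intro t
    by_cases h : t ∈ T
    · obtain ⟨ht1, ht2, ht3⟩ := h
      obtain ⟨w, hw⟩ := drop_minimizer hd hM₀ α (by omega) ht3
      exact ⟨w, fun _ => hw⟩
    · exact ⟨0, fun h2 => absurd h2 h⟩
  choose wfun hwfun using hv
  set v : ℕ → (Fin d → ℝ) := fun t => (t : ℝ) • α - latticeVec M₀ (wfun t) with hvdef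
  -- the key geometric fact: the sign patterns of the minimizers are distinct
  have key : ∀ s ∈ T, ∀ t ∈ T, s < t →
      (fun i => decide (v s i < 0)) ≠ (fun i => decide (v t i < 0)) := by
    intro s hs t ht hst heq
    obtain ⟨hs1, hs2, hs3⟩ := hs
    obtain ⟨ht1, ht2, ht3⟩ := ht
    have hvs := hwfun s ⟨hs1, hs2, hs3⟩
    have hvt := hwfun t ⟨ht1, ht2, ht3⟩
    -- norms
    have hnorm_s : ‖v s‖ = Gfun M₀ α s := hvs.1.symm
    have hnorm_t : ‖v t‖ = Gfun M₀ α t := hvt.1.symm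
    have hanti : Gfun M₀ α (t - 1) ≤ Gfun M₀ α s := G_anti hd hM₀ α (by omega)
    have hlt : ‖v t‖ < ‖v s‖ := by rw [hnorm_s, hnorm_t]; linarith
    -- the difference
    have hdiff : v t - v s = ((t - s : ℕ) : ℝ) • α - latticeVec M₀ (wfun t - wfun s) := by
      rw [hvdef, latticeVec_sub, Nat.cast_sub (le_of_lt hst), sub_smul]
      module
    have hne0 : v t - v s ≠ 0 := by
      intro h0
      have : v t = v s := sub_eq_zero.mp h0
      rw [this] at hlt
      exact lt_irrefl _ hlt
    have htsle : t - s ≤ s - 1 := by omega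
    have hmem : ‖v t - v s‖ ∈ Uset M₀ α (s - 1) :=
      ⟨t - s, htsle, wfun t - wfun s, by rw [hdiff], by rw [hdiff] at hne0 ⊢; exact norm_pos_iff.mpr hne0⟩
    have hge : Gfun M₀ α (s - 1) ≤ ‖v t - v s‖ := G_le hd hM₀ α (s - 1) hmem
    -- sign compatibility
    have hcompat : ∀ i, (0 ≤ v s i ∧ 0 ≤ v t i) ∨ (v s i < 0 ∧ v t i < 0) := by
      intro i
      have := congrFun heq i
      simp only [decide_eq_decide] at this
      rcases lt_or_ge (v s i) 0 with h | h
      · exact Or.inr ⟨h, this.mp h⟩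
      · refine Or.inl ⟨h, ?_⟩
        by_contra h2
        push_neg at h2
        exact absurd (this.mpr h2) (not_lt.mpr h)
    have hle : ‖v s - v t‖ ≤ max ‖v s‖ ‖v t‖ := sign_compat _ _ hcompat
    rw [max_eq_left (le_of_lt hlt)] at hle
    rw [← norm_neg (v s - v t), neg_sub] at hle
    rw [hnorm_s] at hle
    linarith
  -- injectivity of the sign map on T
  have hinj : Set.InjOn (fun t => fun i => decide (v t i < 0)) T := by
    intro s hs t ht heq
    by_contra hne
    rcases lt_or_gt_of_ne hne with h | h
    · exact key s hs t ht h heq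
    · exact key t ht s hs h heq.symm
  -- T is finite with at most 2^d elements
  have hTfin : T.Finite := by
    apply Set.Finite.of_finite_image _ hinj
    exact Set.toFinite _
  have hTcard : T.ncard ≤ 2 ^ d := by
    have := Set.ncard_le_ncard_of_injOn (fun t => fun i => decide (v t i < 0))
      (fun a _ => Set.mem_univ _) hinj (Set.finite_univ)
    simpa [Set.ncard_univ] using this
  -- every value of Gfun on [m0, N-1] is either Gfun m0 or Gfun t for some t ∈ T
  have hval : ∀ u : ℕ, m0 ≤ u → u ≤ N - 1 →
      Gfun M₀ α u = Gfun M₀ α m0 ∨ ∃ t ∈ T, Gfun M₀ α u = Gfun M₀ α t := by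
    intro u hu
    induction u, hu using Nat.le_induction with
    | base => intro _; left; rfl
    | succ u hu ih =>
      intro hub
      rcases eq_or_lt_of_le (G_anti hd hM₀ α (Nat.le_succ u)) with h | h
      · rw [h]; exact ih (by omega)
      · right
        exact ⟨u + 1, ⟨by omega, hub, by simpa using h⟩, rfl⟩
  -- the set of deltaStar values is contained in the image of insert m0 T
  have hsub : { x : ℝ | ∃ n : ℕ, 1 ≤ n ∧ n ≤ N ∧ x = deltaStar M₀ α N n }
      ⊆ Gfun M₀ α '' (insert m0 T) := by
    rintro x ⟨n, hn1, hnN, rfl⟩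
    rw [deltaStar_eq M₀ α N n hn1 hnN]
    set K := max (n - 1) (N - n) with hK
    have hK1 : m0 ≤ K := by
      rcases max_cases (n - 1) (N - n) with ⟨h1, h2⟩ | ⟨h1, h2⟩ <;> omega
    have hK2 : K ≤ N - 1 := by
      apply max_le <;> omega
    rcases hval K hK1 hK2 with h | ⟨t, ht, h⟩
    · exact ⟨m0, Set.mem_insert _ _, h.symm⟩
    · exact ⟨t, Set.mem_insert_of_mem _ ht, h.symm⟩
  -- conclude
  have h1 : gStar M₀ α N ≤ (Gfun M₀ α '' (insert m0 T)).ncard :=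
    Set.ncard_le_ncard hsub ((hTfin.insert m0).image _)
  have h2 : (Gfun M₀ α '' (insert m0 T)).ncard ≤ (insert m0 T).ncard :=
    Set.ncard_image_le (hTfin.insert m0)
  have h3 : (insert m0 T).ncard ≤ T.ncard + 1 := Set.ncard_insert_le m0 T
  calc gStar M₀ α N ≤ (insert m0 T).ncard := le_trans h1 h2
    _ ≤ T.ncard + 1 := h3
    _ ≤ 2 ^ d + 1 := by omega
end

section
/- Let d = 3, L = ℤ³, α = (−157/10000, −742/3125, −23/400) ∈ ℝ³, and N = 73. Then g_N*(α,L) = 9; in fact the distinct values of δ*_{n,N} for 1 ≤ n ≤ 73 are exactly 7/50, 443/3125, 456/3125, 59/400, 13/80, 557/3125, 1993/10000, 43/200, and 23/100. Hence the bound g_N* ≤ 2³ + 1 = 9 is attained in dimension 3. -/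
open Matrix Set

/-! Along `L = ℤ^d` the distance from `nα` to `mα + ℓ` only depends on `(n - m)α` modulo `ℤ^d`,
and in the maximum metric the lattice point nearest to a vector is obtained by rounding each
coordinate. Hence `δ*_{n,N}` is the minimum over `1 ≤ m ≤ N` of the smallest positive distance
from `(n - m)α` to `ℤ^d`, which is the rounding error `‖v - round v‖` unless `v` is a lattice
point, when it is `1`. For `α ∈ ℤ³ / 50000` these rounding errors are computed exactly in
integer arithmetic, and the kernel evaluates the resulting `73 × 73` table of minima. -/

section IntLattice

variable {ι : Type*} [Fintype ι]

theorem pi_norm_eq_sup'_abs [Nonempty ι] (v : ι → ℝ) :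
    ‖v‖ = Finset.univ.sup' Finset.univ_nonempty fun i => |v i| := by
  refine le_antisymm ((pi_norm_le_iff_of_nonempty _).2 fun i => ?_)
    (Finset.sup'_le _ _ fun i _ => norm_le_pi_norm v i)
  exact Finset.le_sup' (fun i => |v i|) (Finset.mem_univ i)

theorem one_le_norm_intCast_of_ne_zero {z : ι → ℤ} (hz : z ≠ 0) :
    1 ≤ ‖fun i => (z i : ℝ)‖ := by
  obtain ⟨i, hi⟩ := Function.ne_iff.1 hz
  calc (1 : ℝ) ≤ |(z i : ℝ)| := by exact_mod_cast Int.one_le_abs hi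
    _ ≤ _ := norm_le_pi_norm (fun i => (z i : ℝ)) i

theorem norm_sub_round_le (v : ι → ℝ) (w : ι → ℤ) :
    ‖v - fun i => (round (v i) : ℝ)‖ ≤ ‖v - fun i => (w i : ℝ)‖ :=
  (pi_norm_le_iff_of_nonneg (norm_nonneg _)).2 fun i =>
    (round_le (v i) (w i)).trans (norm_le_pi_norm (v - fun i => (w i : ℝ)) i)

/-- The smallest positive sup-distance from `v` to `ℤ^ι`: rounding each coordinate gives a
nearest lattice point, and a lattice point is at distance `1` from the nearest other one. -/
noncomputable def latticeGap (v : ι → ℝ) : ℝ :=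
  if ‖v - fun i => (round (v i) : ℝ)‖ = 0 then 1 else ‖v - fun i => (round (v i) : ℝ)‖

theorem latticeGap_pos (v : ι → ℝ) : 0 < latticeGap v := by
  unfold latticeGap
  split_ifs with h
  · exact one_pos
  · exact (norm_nonneg _).lt_of_ne' h

theorem latticeGap_le_norm_sub (v : ι → ℝ) (w : ι → ℤ) (h : 0 < ‖v - fun i => (w i : ℝ)‖) :
    latticeGap v ≤ ‖v - fun i => (w i : ℝ)‖ := by
  unfold latticeGap
  split_ifs with h0
  · have hv : v = fun i => (round (v i) : ℝ) := sub_eq_zero.1 (norm_eq_zero.1 h0)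
    have hdiff : (v - fun i => (w i : ℝ)) = fun i => ((round (v i) - w i : ℤ) : ℝ) := by
      rw [hv]; ext i; simp [round_intCast]
    rw [hdiff] at h ⊢
    refine one_le_norm_intCast_of_ne_zero fun hz => h.ne' ?_
    exact norm_eq_zero.2 (funext fun i => by simp [show round (v i) - w i = 0 from congrFun hz i])
  · exact norm_sub_round_le v w

theorem exists_norm_sub_eq_latticeGap [Nonempty ι] (v : ι → ℝ) :
    ∃ w : ι → ℤ, ‖v - fun i => (w i : ℝ)‖ = latticeGap v := by
  classical
  obtain ⟨i₀⟩ := ‹Nonempty ι›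
  unfold latticeGap
  split_ifs with h0
  · have hv : v = fun i => (round (v i) : ℝ) := sub_eq_zero.1 (norm_eq_zero.1 h0)
    refine ⟨fun i => round (v i) - (Pi.single i₀ 1 : ι → ℤ) i, ?_⟩
    have hdiff : (v - fun i => ((round (v i) - (Pi.single i₀ 1 : ι → ℤ) i : ℤ) : ℝ)) =
        Pi.single i₀ 1 := by
      ext i
      nth_rw 1 [hv]
      by_cases hi : i = i₀ <;> simp [hi]
    rw [hdiff, Pi.norm_single, norm_one]
  · exact ⟨fun i => round (v i), rfl⟩

def latticeGapNum [Nonempty ι] (q : ℕ) (a : ι → ℤ) : ℤ :=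
  let s := Finset.univ.sup' Finset.univ_nonempty fun i => min (a i % q) (q - a i % q)
  if s = 0 then q else s

theorem abs_sub_round_intCast_div {q : ℕ} (hq : 0 < q) (b : ℤ) :
    |(b : ℝ) / q - round ((b : ℝ) / q)| = ((min (b % q) (q - b % q) : ℤ) : ℝ) / q := by
  rw [abs_sub_round_eq_min, Int.fract_div_intCast_eq_div_intCast_mod, Int.cast_min,
    ← min_div_div_right (by positivity)]
  congr 1
  push_cast
  field_simp

theorem latticeGap_intCast_div [Nonempty ι] {q : ℕ} (hq : 0 < q) (a : ι → ℤ) :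
    latticeGap (fun i => (a i : ℝ) / q) = latticeGapNum q a / q := by
  set s := Finset.univ.sup' Finset.univ_nonempty fun i => min (a i % q) (q - a i % q) with hs
  have hnorm : ‖(fun i => (a i : ℝ) / q) - fun i => (round ((a i : ℝ) / q) : ℝ)‖ = s / q := by
    rw [pi_norm_eq_sup'_abs]
    simp only [Pi.sub_apply, abs_sub_round_intCast_div hq]
    exact (Finset.apply_sup'_eq_sup'_comp _ (fun z : ℤ => (z : ℝ) / q) fun x y => by
      push_cast; exact (max_div_div_right (by positivity) _ _).symm).symm
  have hq' : (q : ℝ) ≠ 0 := by positivity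
  unfold latticeGap latticeGapNum
  simp only [hnorm, div_eq_zero_iff, Int.cast_eq_zero, hq', or_false, ← hs]
  split_ifs <;> simp [hq']

end IntLattice

theorem latticeVec_one {d : ℕ} (w : Fin d → ℤ) : latticeVec 1 w = fun i => (w i : ℝ) :=
  vecMul_one _

theorem deltaStar_one_eq_inf' {d : ℕ} [NeZero d] (α : Fin d → ℝ) {N : ℕ} (hN : 1 ≤ N) (n : ℕ) :
    deltaStar 1 α N n = (Finset.Icc 1 N).inf' ⟨1, Finset.mem_Icc.2 ⟨le_rfl, hN⟩⟩
      fun m => latticeGap (((n : ℝ) - m) • α) := by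
  have hsmul (m : ℕ) : (n : ℝ) • α - (m : ℝ) • α = ((n : ℝ) - m) • α := (sub_smul _ _ _).symm
  refine IsLeast.csInf_eq ⟨?_, ?_⟩
  · obtain ⟨m, hm, hδm⟩ := Finset.exists_mem_eq_inf' ⟨1, Finset.mem_Icc.2 ⟨le_rfl, hN⟩⟩
      fun m : ℕ => latticeGap (((n : ℝ) - m) • α)
    obtain ⟨w, hw⟩ := exists_norm_sub_eq_latticeGap (((n : ℝ) - m) • α)
    obtain ⟨hm1, hmN⟩ := Finset.mem_Icc.1 hm
    refine ⟨m, w, hm1, hmN, ?_, ?_⟩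
    · rw [latticeVec_one, hsmul, hw, hδm]
    · rw [hδm]; exact latticeGap_pos _
  · rintro r ⟨m, w, hm1, hmN, rfl, hr⟩
    rw [latticeVec_one, hsmul] at hr ⊢
    exact (Finset.inf'_le _ (Finset.mem_Icc.2 ⟨hm1, hmN⟩)).trans (latticeGap_le_norm_sub _ w hr)

/-- `50000 • α` for the `α` of the example. -/
def exampleAlphaNum : Fin 3 → ℤ := ![-785, -11872, -2875]

def exampleDeltaNum (n : ℕ) : ℤ :=
  (Finset.Icc 1 73).inf' ⟨1, by simp⟩ fun m : ℕ =>
    latticeGapNum 50000 (((n : ℤ) - m) • exampleAlphaNum)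

theorem image_exampleDeltaNum : (Finset.Icc 1 73).image exampleDeltaNum =
    {7000, 7088, 7296, 7375, 8125, 8912, 9965, 10750, 11500} := by
  decide +kernel

theorem deltaStar_example (n : ℕ) :
    deltaStar 1 ![-157/10000, -742/3125, -23/400] 73 n = exampleDeltaNum n / 50000 := by
  have hα (m : ℕ) : ((n : ℝ) - m) • ![-157/10000, -742/3125, -23/400] =
      fun i => ((((n : ℤ) - m) • exampleAlphaNum) i : ℝ) / (50000 : ℕ) := by
    ext i; fin_cases i <;> simp [exampleAlphaNum] <;> ring
  rw [deltaStar_one_eq_inf' _ (by norm_num)]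
  simp only [hα, latticeGap_intCast_div (by norm_num : 0 < 50000)]
  exact (Finset.apply_inf'_eq_inf'_comp _ (fun z : ℤ => (z : ℝ) / (50000 : ℕ)) fun x y => by
    push_cast; exact (min_div_div_right (by positivity) _ _).symm).symm

theorem setOf_deltaStar_example :
    { x : ℝ | ∃ n : ℕ, 1 ≤ n ∧ n ≤ 73 ∧
        x = deltaStar (1 : Matrix (Fin 3) (Fin 3) ℝ) ![-157/10000, -742/3125, -23/400] 73 n } =
      (fun z : ℤ => (z : ℝ) / 50000) '' ↑((Finset.Icc 1 73).image exampleDeltaNum) := by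
  ext x
  simp [deltaStar_example, eq_comm, and_assoc]

/-- For `d = 3`, `L = ℤ³`, `α = (−157/10000, −742/3125, −23/400)` and `N = 73`, the distinct
values of `δ*_{n,N}` for `1 ≤ n ≤ 73` are exactly `7/50, 443/3125, 456/3125, 59/400, 13/80,
557/3125, 1993/10000, 43/200, 23/100`, and hence `g_N^*(α, L) = 9`, attaining the bound
`2³ + 1 = 9`. -/
theorem gaps_example_dim3 :
    { x : ℝ | ∃ n : ℕ, 1 ≤ n ∧ n ≤ 73 ∧
        x = deltaStar (1 : Matrix (Fin 3) (Fin 3) ℝ) ![-157/10000, -742/3125, -23/400] 73 n }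
      = ({7/50, 443/3125, 456/3125, 59/400, 13/80, 557/3125, 1993/10000, 43/200, 23/100} : Set ℝ) ∧
    gStar (1 : Matrix (Fin 3) (Fin 3) ℝ) ![-157/10000, -742/3125, -23/400] 73 = 9 ∧
    9 = 2 ^ 3 + 1 := by
  have hinj : Function.Injective fun z : ℤ => (z : ℝ) / 50000 := fun x y h => by
    simpa using h
  refine ⟨?_, ?_, by norm_num⟩
  · rw [setOf_deltaStar_example, image_exampleDeltaNum]
    push_cast [Set.image_insert_eq, Set.image_singleton]
    norm_num
  · rw [gStar, setOf_deltaStar_example, Set.ncard_image_of_injective _ hinj,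
      Set.ncard_coe_finset, image_exampleDeltaNum]
    rfl
end

section
/- For every d ≥ 1 and every M ∈ SL(d+1,ℝ), the set of values { F(M,t) : t ∈ (0,1) } is finite. -/
open Matrix Set

/-- The point of the lattice `ℤ^{d+1} M` corresponding to the integer row vector `w`
(row vectors acting on the right). -/
noncomputable def latPoint {d : ℕ} (M : Matrix (Fin (d + 1)) (Fin (d + 1)) ℝ)
    (w : Fin (d + 1) → ℤ) : Fin (d + 1) → ℝ :=
  (fun i => (w i : ℝ)) ᵥ* M

/-- For a point `x = (u, v) ∈ ℝ^{d+1}`, `vpart x = v ∈ ℝ^d` is the vector of the last `d`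
coordinates (the first coordinate `x 0` being `u`). -/
def vpart {d : ℕ} (x : Fin (d + 1) → ℝ) : Fin d → ℝ := fun i => x i.succ

/-- The set `S(M, t) = { ‖v‖_∞ : (u, v) ∈ ℤ^{d+1} M, ‖v‖_∞ > 0, −t < u < 1 − t }`.
(The norm on `Fin d → ℝ` is the maximum norm.) -/
noncomputable def FSet (d : ℕ) (M : Matrix (Fin (d + 1)) (Fin (d + 1)) ℝ) (t : ℝ) :
    Set ℝ :=
  { r : ℝ | ∃ w : Fin (d + 1) → ℤ, r = ‖vpart (latPoint M w)‖ ∧ 0 < r ∧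
      -t < latPoint M w 0 ∧ latPoint M w 0 < 1 - t }

/-- `F(M, t) = min S(M, t)`. -/
noncomputable def Fval (d : ℕ) (M : Matrix (Fin (d + 1)) (Fin (d + 1)) ℝ) (t : ℝ) : ℝ :=
  sInf (FSet d M t)

/-! Since the window `(-t, 1 - t)` always contains `[0, 1/2)` or `(-1/2, 0]`, one lattice point
`(u, v)` with `v ≠ 0` and `0 ≤ u < 1/2`, used with either sign, bounds `F(M, t)` by a constant `C`
independent of `t`. Such a point exists by Dirichlet's approximation theorem applied to the first
coordinates of two rows of `M`, after translating along a lattice point with `v = 0` if necessary.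
Every `F(M, t)` is then attained at a lattice point in the bounded box `|u| ≤ 1`, `‖v‖ ≤ C`, and
there are only finitely many of those. -/

theorem csInf_mem_inter_Iic_of_finite {α : Type*} [ConditionallyCompleteLinearOrder α]
    {s : Set α} {c : α} (hfin : (s ∩ Iic c).Finite) (hne : (s ∩ Iic c).Nonempty) :
    sInf s ∈ s ∩ Iic c := by
  obtain ⟨m, hm, hmin⟩ := Set.exists_min_image _ id hfin hne
  have hleast : IsLeast s m :=
    ⟨hm.1, fun x hx => (le_total x c).elim (fun hxc => hmin x ⟨hx, hxc⟩) hm.2.trans⟩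
  rwa [hleast.csInf_eq]

theorem Real.exists_int_pair_ne_zero_mul_add_mul_mem_Ico (x y : ℝ) {ε : ℝ} (hε : 0 < ε) :
    ∃ a b : ℤ, (a, b) ≠ 0 ∧ a * x + b * y ∈ Ico 0 ε := by
  suffices h : ∃ a b : ℤ, (a, b) ≠ 0 ∧ |a * x + b * y| < ε by
    obtain ⟨a, b, hab, hlt⟩ := h
    rcases le_total 0 (a * x + b * y) with hnonneg | hnonpos
    · exact ⟨a, b, hab, hnonneg, (abs_lt.1 hlt).2⟩
    · refine ⟨-a, -b, by simpa using hab, ?_, ?_⟩ <;> push_cast <;> linarith [abs_lt.1 hlt]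
  rcases eq_or_ne x 0 with rfl | hx
  · exact ⟨1, 0, by simp, by simpa⟩
  obtain ⟨n, hn⟩ := exists_nat_one_div_lt (div_pos hε (abs_pos.2 hx))
  obtain ⟨j, k, hk, -, hjk⟩ := Real.exists_int_int_abs_mul_sub_le (y / x) n.succ_pos
  refine ⟨-j, k, by simp [hk.ne'], ?_⟩
  calc |((-j : ℤ) : ℝ) * x + k * y| = |x| * |k * (y / x) - j| := by
        rw [← abs_mul]; congr 1; field_simp; push_cast; ring
    _ ≤ |x| * (1 / (n + 1)) := by
        gcongr
        calc _ ≤ 1 / ((n.succ : ℕ) + 1 : ℝ) := hjk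
          _ ≤ 1 / (n + 1) := by gcongr; linarith
    _ < |x| * (ε / |x|) := by gcongr
    _ = ε := mul_div_cancel₀ ε (abs_ne_zero.2 hx)

section LatPoint

variable {d : ℕ} (M : Matrix (Fin (d + 1)) (Fin (d + 1)) ℝ)

noncomputable def latPointHom : (Fin (d + 1) → ℤ) →+ (Fin (d + 1) → ℝ) :=
  (Matrix.vecMulLinear M).toAddMonoidHom.comp ((Int.castAddHom ℝ).compLeft (Fin (d + 1)))

theorem latPoint_add (w w' : Fin (d + 1) → ℤ) :
    latPoint M (w + w') = latPoint M w + latPoint M w' :=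
  map_add (latPointHom M) w w'

theorem latPoint_sub (w w' : Fin (d + 1) → ℤ) :
    latPoint M (w - w') = latPoint M w - latPoint M w' :=
  map_sub (latPointHom M) w w'

theorem latPoint_neg (w : Fin (d + 1) → ℤ) : latPoint M (-w) = -latPoint M w :=
  map_neg (latPointHom M) w

theorem latPoint_zsmul (k : ℤ) (w : Fin (d + 1) → ℤ) :
    latPoint M (k • w) = k • latPoint M w :=
  map_zsmul (latPointHom M) k w

theorem latPoint_zero : latPoint M 0 = 0 :=
  map_zero (latPointHom M)

theorem latPoint_single (i : Fin (d + 1)) (a : ℤ) :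
    latPoint M (Pi.single i a) = (a : ℝ) • M i := by
  ext j; simp [latPoint, Matrix.vecMul, dotProduct, Pi.single_apply]

theorem latPoint_injective (hM : M.det ≠ 0) : Function.Injective (latPoint M) :=
  (Matrix.vecMul_injective_iff_isUnit.2 ((M.isUnit_iff_isUnit_det).2 hM.isUnit)).comp
    (Int.cast_injective.comp_left)

theorem latPoint_ne_zero (hM : M.det ≠ 0) {w : Fin (d + 1) → ℤ} (hw : w ≠ 0) :
    latPoint M w ≠ 0 :=
  latPoint_zero M ▸ (latPoint_injective M hM).ne hw

end LatPoint

section VPart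

variable {d : ℕ}

theorem vpart_sub (x y : Fin (d + 1) → ℝ) : vpart (x - y) = vpart x - vpart y := rfl

theorem vpart_zsmul (n : ℤ) (x : Fin (d + 1) → ℝ) : vpart (n • x) = n • vpart x := rfl

theorem vpart_neg (x : Fin (d + 1) → ℝ) : vpart (-x) = -vpart x := rfl

theorem apply_zero_ne_zero_of_vpart_eq_zero {x : Fin (d + 1) → ℝ} (hx : x ≠ 0)
    (hv : vpart x = 0) : x 0 ≠ 0 := by
  refine fun h0 => hx (funext fun i => ?_)
  cases i using Fin.cases with
  | zero => exact h0
  | succ i => exact congrFun hv i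

theorem norm_le_max_norm_vpart (x : Fin (d + 1) → ℝ) : ‖x‖ ≤ max ‖x 0‖ ‖vpart x‖ := by
  refine (pi_norm_le_iff_of_nonneg (by positivity)).2 fun i => ?_
  cases i using Fin.cases with
  | zero => exact le_max_left _ _
  | succ i => exact (norm_le_pi_norm (vpart x) i).trans (le_max_right _ _)

end VPart

section LatticePoints

variable {d : ℕ} {M : Matrix (Fin (d + 1)) (Fin (d + 1)) ℝ}

theorem finite_setOf_norm_latPoint_le (hM : M.det ≠ 0) (R : ℝ) :
    {w : Fin (d + 1) → ℤ | ‖latPoint M w‖ ≤ R}.Finite := by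
  set f := LinearMap.toContinuousLinearMap (Matrix.vecMulLinear M⁻¹)
  refine ((isCompact_closedBall (0 : Fin (d + 1) → ℤ) (‖f‖ * R)).finite_of_discrete).subset
    fun w hw => mem_closedBall_zero_iff.2 ?_
  have hrecover : (fun i => (w i : ℝ)) = f (latPoint M w) := by
    simp [f, latPoint, Matrix.vecMul_vecMul, Matrix.mul_nonsing_inv _ hM.isUnit]
  calc ‖w‖ ≤ ‖fun i => (w i : ℝ)‖ :=
        (pi_norm_le_iff_of_nonneg (norm_nonneg _)).2 fun i =>
          (Int.norm_cast_real (w i)).symm ▸ norm_le_pi_norm (fun i => (w i : ℝ)) i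
    _ ≤ ‖f‖ * ‖latPoint M w‖ := hrecover ▸ f.le_opNorm _
    _ ≤ ‖f‖ * R := by gcongr; exact hw

theorem exists_vpart_latPoint_ne_zero (hd : 1 ≤ d) (hM : M.det ≠ 0) :
    ∃ w, vpart (latPoint M w) ≠ 0 := by
  by_contra! h
  refine hM (Matrix.det_eq_zero_of_column_eq_zero (Fin.succ ⟨0, hd⟩) fun i => ?_)
  simpa [latPoint_single, vpart] using congrFun (h (Pi.single i 1)) ⟨0, hd⟩

theorem exists_ne_zero_latPoint_apply_zero_mem_Ico (hd : 1 ≤ d) {ε : ℝ} (hε : 0 < ε) :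
    ∃ w ≠ 0, latPoint M w 0 ∈ Ico 0 ε := by
  obtain ⟨e, rfl⟩ : ∃ e, d = e + 1 := ⟨d - 1, by omega⟩
  obtain ⟨a, b, hab, habε⟩ :=
    Real.exists_int_pair_ne_zero_mul_add_mul_mem_Ico (M 0 0) (M 1 0) hε
  have hu : latPoint M (Pi.single 0 a + Pi.single 1 b) 0 = a * M 0 0 + b * M 1 0 := by
    rw [latPoint_add, latPoint_single, latPoint_single]
    simp
  refine ⟨Pi.single 0 a + Pi.single 1 b, fun hw => hab ?_, by rwa [hu]⟩
  have h0 : a = 0 := by simpa using congrFun hw 0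
  have h1 : b = 0 := by simpa using congrFun hw 1
  simp [h0, h1]

theorem exists_vpart_latPoint_ne_zero_apply_zero_mem_Ico (hd : 1 ≤ d) (hM : M.det ≠ 0)
    {ε : ℝ} (hε : 0 < ε) :
    ∃ w, vpart (latPoint M w) ≠ 0 ∧ latPoint M w 0 ∈ Ico 0 ε := by
  obtain ⟨p, hp, hp0, hpε⟩ := exists_ne_zero_latPoint_apply_zero_mem_Ico (M := M) hd hε
  obtain hvp | hvp := ne_or_eq (vpart (latPoint M p)) 0
  · exact ⟨p, hvp, hp0, hpε⟩
  have hα : 0 < latPoint M p 0 := hp0.lt_of_ne' <|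
    apply_zero_ne_zero_of_vpart_eq_zero (latPoint_ne_zero M hM hp) hvp
  obtain ⟨q, hq⟩ := exists_vpart_latPoint_ne_zero hd hM
  -- Since `p` has `v`-part zero, translating `q` by multiples of `p` keeps its `v`-part and can
  -- bring its first coordinate into `[0, latPoint M p 0)`.
  set n := toIcoDiv hα 0 (latPoint M q 0)
  have hu : latPoint M (q - n • p) 0 = toIcoMod hα 0 (latPoint M q 0) := by
    rw [latPoint_sub, latPoint_zsmul]
    exact self_sub_toIcoDiv_zsmul hα 0 _
  have hmem := toIcoMod_mem_Ico hα 0 (latPoint M q 0)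
  rw [zero_add] at hmem
  refine ⟨q - n • p, ?_, hu ▸ ⟨hmem.1, hmem.2.trans hpε⟩⟩
  rwa [latPoint_sub, latPoint_zsmul, vpart_sub, vpart_zsmul, hvp, smul_zero, sub_zero]

end LatticePoints

section FSet

variable {d : ℕ} {M : Matrix (Fin (d + 1)) (Fin (d + 1)) ℝ}

theorem exists_forall_FSet_inter_Iic_nonempty (hd : 1 ≤ d) (hM : M.det ≠ 0) :
    ∃ C, ∀ t ∈ Ioo (0 : ℝ) 1, (FSet d M t ∩ Iic C).Nonempty := by
  obtain ⟨w, hv, h0, hlt⟩ := exists_vpart_latPoint_ne_zero_apply_zero_mem_Ico hd hM one_half_pos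
  refine ⟨‖vpart (latPoint M w)‖, fun t ⟨ht0, ht1⟩ => ?_⟩
  -- The window `(-t, 1 - t)` contains `[0, 1/2)` or `(-1/2, 0]`.
  rcases le_or_gt t (1 / 2) with ht | ht
  · exact ⟨_, ⟨w, rfl, norm_pos_iff.2 hv, by linarith, by linarith⟩, self_mem_Iic⟩
  · refine ⟨_, ⟨-w, rfl, ?_, ?_, ?_⟩, ?_⟩ <;>
      simp only [latPoint_neg, vpart_neg, norm_neg, Pi.neg_apply, mem_Iic, le_rfl]
    · exact norm_pos_iff.2 hv
    all_goals linarith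

theorem FSet_inter_Iic_subset_image {t : ℝ} (ht0 : 0 ≤ t) (ht1 : t ≤ 1) (C : ℝ) :
    FSet d M t ∩ Iic C ⊆
      (fun w => ‖vpart (latPoint M w)‖) '' {w | ‖latPoint M w‖ ≤ max 1 C} := by
  rintro _ ⟨⟨w, rfl, -, hlo, hhi⟩, hC⟩
  refine ⟨w, (norm_le_max_norm_vpart _).trans (max_le_max ?_ hC), rfl⟩
  rw [Real.norm_eq_abs, abs_le]
  constructor <;> linarith

end FSet

/-- For every `d ≥ 1` and every `M ∈ SL(d+1, ℝ)`, the set of values `{F(M, t) : t ∈ (0, 1)}`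
is finite. -/
theorem Fval_finite_range (d : ℕ) (hd : 1 ≤ d)
    (M : Matrix (Fin (d + 1)) (Fin (d + 1)) ℝ) (hM : M.det = 1) :
    { r : ℝ | ∃ t : ℝ, 0 < t ∧ t < 1 ∧ r = Fval d M t }.Finite := by
  have hM' : M.det ≠ 0 := hM ▸ one_ne_zero
  obtain ⟨C, hC⟩ := exists_forall_FSet_inter_Iic_nonempty hd hM'
  have hfin := (finite_setOf_norm_latPoint_le hM' (max 1 C)).image
    fun w => ‖vpart (latPoint M w)‖
  refine hfin.subset ?_
  rintro _ ⟨t, ht0, ht1, rfl⟩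
  have hsub := FSet_inter_Iic_subset_image (M := M) ht0.le ht1.le C
  exact hsub (csInf_mem_inter_Iic_of_finite (hfin.subset hsub) (hC t ⟨ht0, ht1⟩))
end

section
/- Let d ≥ 1, let L be a unimodular lattice in ℝ^d with L = ℤ^d M₀ for M₀ ∈ SL(d,ℝ), let α ∈ ℝ^d, let N ≥ 1 be an integer and set N₊ = N + 1/2. Then for every 1 ≤ n ≤ N, δ*_{n,N} = N₊^{−1/d} · F( A_{N₊}(α), n/N₊ ). -/
open Matrix Set

/-- Reindex a block matrix over `Fin 1 ⊕ Fin d` as a matrix over `Fin (d + 1)` (the `Fin 1`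
block corresponding to the first coordinate). -/
def blockEmbed (d : ℕ) (B : Matrix (Fin 1 ⊕ Fin d) (Fin 1 ⊕ Fin d) ℝ) :
    Matrix (Fin (d + 1)) (Fin (d + 1)) ℝ :=
  Matrix.reindex (finSumFinEquiv.trans (finCongr (Nat.add_comm 1 d)))
    (finSumFinEquiv.trans (finCongr (Nat.add_comm 1 d))) B

/-- The matrix `A_s(α) = [[1, 0], [0, M₀]] · [[1, α], [0, 1_d]] · [[s⁻¹, 0], [0, s^{1/d}·1_d]]`
in `SL(d+1, ℝ)`, with `α` a row vector. -/
noncomputable def AMat (d : ℕ) (M₀ : Matrix (Fin d) (Fin d) ℝ) (α : Fin d → ℝ) (s : ℝ) :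
    Matrix (Fin (d + 1)) (Fin (d + 1)) ℝ :=
  blockEmbed d (Matrix.fromBlocks 1 0 0 M₀) *
  blockEmbed d (Matrix.fromBlocks 1 (Matrix.of fun _ j => α j) 0 1) *
  blockEmbed d (Matrix.fromBlocks (Matrix.of fun _ _ => s⁻¹) 0 0
    ((s ^ ((1 : ℝ) / (d : ℝ))) • 1))

/-! The diagonal factor of `A_s(α)` rescales `u` by `s⁻¹` and `v` by `s^{1/d}`, so undoing it
identifies `ℤ^{d+1} A_s(α)` with the points `(k, k α + ℓ)`, `k ∈ ℤ`, `ℓ ∈ L`. For `s = N₊` and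
`t = n / N₊` the strip `-t < u < 1 - t` becomes `-n < k < N₊ - n`, i.e. `k = m - n` with
`1 ≤ m ≤ N`, and `k α + ℓ = -(n α - m α - ℓ)`. -/

open Pointwise

def stripNorms {d : ℕ} (M₀ : Matrix (Fin d) (Fin d) ℝ) (α : Fin d → ℝ) (a b : ℝ) : Set ℝ :=
  { r : ℝ | ∃ (k : ℤ) (w : Fin d → ℤ), a < k ∧ (k : ℝ) < b ∧
      r = ‖(k : ℝ) • α + latticeVec M₀ w‖ ∧ 0 < r }

section blockEmbed

variable {d : ℕ}

abbrev blockEquiv (d : ℕ) : Fin 1 ⊕ Fin d ≃ Fin (d + 1) :=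
  finSumFinEquiv.trans (finCongr (Nat.add_comm 1 d))

lemma blockEquiv_inl : blockEquiv d (Sum.inl 0) = 0 := rfl

lemma blockEquiv_inr (j : Fin d) : blockEquiv d (Sum.inr j) = j.succ := by
  ext; simp

lemma blockEmbed_mul (A B : Matrix (Fin 1 ⊕ Fin d) (Fin 1 ⊕ Fin d) ℝ) :
    blockEmbed d A * blockEmbed d B = blockEmbed d (A * B) := by
  simp only [blockEmbed, Matrix.reindex_apply, Matrix.submatrix_mul_equiv]

lemma latPoint_blockEmbed_apply (P : Matrix (Fin 1 ⊕ Fin d) (Fin 1 ⊕ Fin d) ℝ)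
    (w : Fin (d + 1) → ℤ) (k : Fin 1 ⊕ Fin d) :
    latPoint (blockEmbed d P) w (blockEquiv d k) =
      (((fun i => (w i : ℝ)) ∘ blockEquiv d) ᵥ* P) k := by
  rw [latPoint, blockEmbed, Matrix.reindex_apply, Matrix.submatrix_vecMul_equiv]
  simp

end blockEmbed

section AMat

variable {d : ℕ} (M₀ : Matrix (Fin d) (Fin d) ℝ) (α : Fin d → ℝ) (s : ℝ)

lemma AMat_eq_blockEmbed :
    AMat d M₀ α s = blockEmbed d (Matrix.fromBlocks (Matrix.of fun _ _ => s⁻¹)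
      ((s ^ ((1 : ℝ) / d)) • Matrix.of fun _ j => α j) 0 ((s ^ ((1 : ℝ) / d)) • M₀)) := by
  rw [AMat, blockEmbed_mul, blockEmbed_mul, Matrix.fromBlocks_multiply,
    Matrix.fromBlocks_multiply]
  simp [Matrix.mul_smul]

lemma latPoint_AMat_zero (w : Fin (d + 1) → ℤ) :
    latPoint (AMat d M₀ α s) w 0 = (w 0 : ℝ) * s⁻¹ := by
  rw [AMat_eq_blockEmbed, ← blockEquiv_inl, latPoint_blockEmbed_apply, Matrix.vecMul_fromBlocks]
  simp [Matrix.vecMul, dotProduct]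

lemma vpart_latPoint_AMat (w : Fin (d + 1) → ℤ) :
    vpart (latPoint (AMat d M₀ α s) w) =
      (s ^ ((1 : ℝ) / d)) • ((w 0 : ℝ) • α + latticeVec M₀ (Fin.tail w)) := by
  funext j
  rw [vpart, ← blockEquiv_inr, AMat_eq_blockEmbed, latPoint_blockEmbed_apply,
    Matrix.vecMul_fromBlocks]
  simp only [Sum.elim_inr, Equiv.coe_trans, smul_of, Pi.add_apply, vecMul, dotProduct,
    Finset.univ_unique, Fin.default_eq_zero, Function.comp_apply, finSumFinEquiv_apply_left,
    finCongr_apply, of_apply, Pi.smul_apply, smul_eq_mul, Finset.sum_singleton,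
    finSumFinEquiv_apply_right, Fin.cast_natAdd, Fin.addNat_one, Matrix.smul_apply, latticeVec,
    Fin.tail]
  rw [show (Fin.cast (Nat.add_comm 1 d) (Fin.castAdd d 0) : Fin (d + 1)) = 0 from rfl,
    mul_add, Finset.mul_sum]
  congr 1
  · ring
  · exact Finset.sum_congr rfl fun _ _ => by ring

lemma FSet_AMat {s : ℝ} (hs : 0 < s) (t : ℝ) :
    FSet d (AMat d M₀ α s) t = (s ^ ((1 : ℝ) / d)) • stripNorms M₀ α (-t * s) ((1 - t) * s) := by
  have hc : 0 < s ^ ((1 : ℝ) / d) := Real.rpow_pos_of_pos hs _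
  have hnorm (w : Fin (d + 1) → ℤ) : ‖vpart (latPoint (AMat d M₀ α s) w)‖ =
      s ^ ((1 : ℝ) / d) * ‖(w 0 : ℝ) • α + latticeVec M₀ (Fin.tail w)‖ := by
    rw [vpart_latPoint_AMat, norm_smul, Real.norm_of_nonneg hc.le]
  have hstrip (x a : ℝ) : a < x * s⁻¹ ↔ a * s < x := by rw [lt_mul_inv_iff₀ hs]
  have hstrip' (x b : ℝ) : x * s⁻¹ < b ↔ x < b * s := by rw [mul_inv_lt_iff₀ hs]
  ext r
  simp only [FSet, Set.mem_smul_set, stripNorms, latPoint_AMat_zero, hnorm, hstrip, hstrip',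
    smul_eq_mul]
  constructor
  · rintro ⟨w, rfl, hpos, hlo, hhi⟩
    exact ⟨_, ⟨w 0, Fin.tail w, hlo, hhi, rfl, pos_of_mul_pos_right hpos hc.le⟩, rfl⟩
  · rintro ⟨_, ⟨k, w, hlo, hhi, rfl, hpos⟩, rfl⟩
    exact ⟨Fin.cons k w, by simp [Fin.tail_cons], by positivity, by simpa using hlo,
      by simpa using hhi⟩

end AMat

lemma deltaStar_eq_sInf_stripNorms {d : ℕ} (M₀ : Matrix (Fin d) (Fin d) ℝ) (α : Fin d → ℝ)
    (N n : ℕ) :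
    deltaStar M₀ α N n = sInf (stripNorms M₀ α (-n) (N + 1 / 2 - n)) := by
  have hnorm (m : ℝ) (w : Fin d → ℤ) :
      ‖(n : ℝ) • α - m • α - latticeVec M₀ w‖ = ‖(m - n) • α + latticeVec M₀ w‖ := by
    rw [← norm_neg]; congr 1; module
  rw [deltaStar]
  congr 1
  ext r
  simp only [Set.mem_ofPred_eq, stripNorms, hnorm]
  constructor
  · rintro ⟨m, w, hm1, hmN, rfl, hpos⟩
    refine ⟨m - n, w, ?_, ?_, by push_cast; rfl, hpos⟩
    · have : (1 : ℝ) ≤ m := by exact_mod_cast hm1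
      push_cast; linarith
    · have : (m : ℝ) ≤ N := by exact_mod_cast hmN
      push_cast; linarith
  · rintro ⟨k, w, hlo, hhi, rfl, hpos⟩
    have hlo' : -(n : ℤ) < k := by exact_mod_cast hlo
    have hhi' : k < (N : ℤ) + 1 - n := by
      have : (k : ℝ) < ((N + 1 - n : ℤ) : ℝ) := by push_cast; linarith
      exact_mod_cast this
    refine ⟨(k + n).toNat, w, by omega, by omega, ?_, hpos⟩
    rw [show (((k + n).toNat : ℕ) : ℝ) = k + n by exact_mod_cast Int.toNat_of_nonneg (by omega)]
    ring_nf

theorem deltaStar_eq_Fval_general (d : ℕ)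
    (M₀ : Matrix (Fin d) (Fin d) ℝ)
    (α : Fin d → ℝ) (N : ℕ) (n : ℕ) :
    deltaStar M₀ α N n =
      ((N : ℝ) + 1/2) ^ (-(1 : ℝ) / (d : ℝ)) *
        Fval d (AMat d M₀ α ((N : ℝ) + 1/2)) ((n : ℝ) / ((N : ℝ) + 1/2)) := by
  have hs : 0 < (N : ℝ) + 1 / 2 := by positivity
  rw [Fval, FSet_AMat M₀ α hs, Real.sInf_smul_of_nonneg (by positivity), smul_eq_mul,
    ← mul_assoc, ← Real.rpow_add hs, neg_div, neg_add_cancel, Real.rpow_zero, one_mul,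
    deltaStar_eq_sInf_stripNorms]
  congr 2 <;> field_simp

/-- Let `d ≥ 1`, `L = ℤ^d M₀` a unimodular lattice, `α ∈ ℝ^d`, `N ≥ 1` an integer, and set
`N₊ = N + 1/2`.  Then for every `1 ≤ n ≤ N`,
`δ*_{n,N} = N₊^{−1/d} · F(A_{N₊}(α), n / N₊)`. -/
theorem deltaStar_eq_Fval (d : ℕ) (hd : 1 ≤ d)
    (M₀ : Matrix (Fin d) (Fin d) ℝ) (hM₀ : M₀.det = 1)
    (α : Fin d → ℝ) (N : ℕ) (hN : 1 ≤ N) (n : ℕ) (hn1 : 1 ≤ n) (hn2 : n ≤ N) :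
    deltaStar M₀ α N n =
      ((N : ℝ) + 1/2) ^ (-(1 : ℝ) / (d : ℝ)) *
        Fval d (AMat d M₀ α ((N : ℝ) + 1/2)) ((n : ℝ) / ((N : ℝ) + 1/2)) :=
  deltaStar_eq_Fval_general d M₀ α N n
end
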